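/- arXiv:2310.13658 — 5 statements merged into one kernel-verified Lean document; each statement's English description precedes it below -/
import Mathlib

section
/- For every integer n ≥ 0, p(n) = ∑_{k=1}^{n+1} S^{(1)}_{n+1,k} · μ(k), where the sum is over k from 1 to n+1. -/
/-!
Deleting one copy of a part `k` maps the partitions of `N` that contain `k` bijectively onto the
partitions of `N - k`, so iterating gives `S⁽¹⁾(N, k) = ∑_{1 ≤ m ≤ N, k ∣ m} p(N - m)`.
Summing against `μ(k)` and exchanging the sums leaves `∑_{1 ≤ m ≤ N} p(N - m) ∑_{d ∣ m} μ(d)`,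
and Möbius cancellation keeps only the term `m = 1`, which is `p(N - 1)`.
-/

open Finset

/-- The number of partitions of `n`. -/
def p (n : ℕ) : ℕ := Fintype.card (Nat.Partition n)

/-- The partition function extended by zero to negative integer arguments. -/
def pz (m : ℤ) : ℤ := if 0 ≤ m then (p m.toNat : ℤ) else 0

/-- `S r n k` : the total number of parts equal to `k` in all partitions of `n`
whose parts are all at least `r`. -/
def S (r n k : ℕ) : ℕ :=
  ∑ P : Nat.Partition n, if ∀ i ∈ P.parts, r ≤ i then P.parts.count k else 0

theorem Finset.sum_range_div_eq_sum_filter_dvd {M : Type*} [AddCommMonoid M] (f : ℕ → M)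
    {k : ℕ} (hk : 0 < k) (n : ℕ) :
    ∑ j ∈ range (n / k), f ((j + 1) * k) = ∑ m ∈ Icc 1 n with k ∣ m, f m := by
  refine sum_nbij' (fun j => (j + 1) * k) (· / k - 1) ?_ ?_ ?_ ?_ (fun _ _ => rfl)
  · intro j hj
    rw [mem_range, Nat.lt_iff_add_one_le, Nat.le_div_iff_mul_le hk] at hj
    rw [mem_filter, mem_Icc]
    exact ⟨⟨Nat.mul_pos j.succ_pos hk, hj⟩, dvd_mul_left k _⟩
  · rintro m hm
    obtain ⟨⟨hm1, hmn⟩, i, rfl⟩ := mem_filter.mp hm |>.imp_left mem_Icc.mp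
    have hi : 0 < i := Nat.pos_of_mul_pos_left hm1
    rw [mem_range, Nat.mul_div_cancel_left _ hk]
    have := (Nat.le_div_iff_mul_le hk).mpr (mul_comm k i ▸ hmn)
    omega
  · intro j _
    simp [Nat.mul_div_cancel _ hk]
  · rintro m hm
    obtain ⟨⟨hm1, -⟩, i, rfl⟩ := mem_filter.mp hm |>.imp_left mem_Icc.mp
    have hi : 0 < i := Nat.pos_of_mul_pos_left hm1
    rw [Nat.mul_div_cancel_left _ hk, Nat.sub_add_cancel hi, mul_comm]

namespace Nat.Partition

def eraseEquiv {n k : ℕ} (hk : 0 < k) (hkn : k ≤ n) :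
    {P : n.Partition // k ∈ P.parts} ≃ (n - k).Partition where
  toFun P := ⟨P.1.parts.erase k, fun hi => P.1.parts_pos (Multiset.mem_of_mem_erase hi), by
    have := congrArg Multiset.sum (Multiset.cons_erase P.2)
    rw [Multiset.sum_cons, P.1.parts_sum] at this
    omega⟩
  invFun Q := ⟨⟨k ::ₘ Q.parts, by
      rintro i hi
      rcases Multiset.mem_cons.mp hi with rfl | hi
      exacts [hk, Q.parts_pos hi], by
      rw [Multiset.sum_cons, Q.parts_sum]; omega⟩, Multiset.mem_cons_self _ _⟩
  left_inv P := Subtype.ext <| Nat.Partition.ext <| Multiset.cons_erase P.2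
  right_inv Q := Nat.Partition.ext <| Multiset.erase_cons_head _ _

theorem count_parts_eq_zero_of_lt {n k : ℕ} (P : n.Partition) (h : n < k) :
    P.parts.count k = 0 := by
  refine Multiset.count_eq_zero.mpr fun hk => ?_
  have := Multiset.le_sum_of_mem hk
  rw [P.parts_sum] at this
  omega

theorem sum_count_parts_eq_card_add {n k : ℕ} (hk : 0 < k) (hkn : k ≤ n) :
    ∑ P : n.Partition, P.parts.count k
      = Fintype.card (n - k).Partition + ∑ Q : (n - k).Partition, Q.parts.count k := by
  classical
  have hfilter : ∑ P : n.Partition, P.parts.count k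
      = ∑ P : {P : n.Partition // k ∈ P.parts}, P.1.parts.count k := by
    rw [← sum_filter_of_ne fun P _ hne => Multiset.count_ne_zero.mp hne]
    exact sum_subtype _ (by simp) _
  rw [hfilter, ← (eraseEquiv hk hkn).symm.sum_comp]
  simp [eraseEquiv, sum_add_distrib, add_comm]

theorem sum_count_parts_eq_sum_range {k : ℕ} (hk : 0 < k) (n : ℕ) :
    ∑ P : n.Partition, P.parts.count k
      = ∑ j ∈ range (n / k), Fintype.card (n - (j + 1) * k).Partition := by
  induction n using Nat.strong_induction_on with
  | _ n ih =>
    rcases lt_or_ge n k with hnk | hkn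
    · simp [Nat.div_eq_of_lt hnk, count_parts_eq_zero_of_lt _ hnk]
    · rw [sum_count_parts_eq_card_add hk hkn, ih (n - k) (by omega),
        Nat.div_eq_sub_div hk hkn, sum_range_succ', add_comm]
      congr 1
      · refine sum_congr rfl fun j _ => ?_
        rw [show n - k - (j + 1) * k = n - (j + 1 + 1) * k by
          rw [Nat.sub_sub, add_mul (j + 1), one_mul, add_comm k]]
      · simp

theorem sum_count_parts_eq_sum_multiples {k : ℕ} (hk : 0 < k) (n : ℕ) :
    ∑ P : n.Partition, P.parts.count k
      = ∑ m ∈ Icc 1 n with k ∣ m, Fintype.card (n - m).Partition := by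
  rw [sum_count_parts_eq_sum_range hk,
    Finset.sum_range_div_eq_sum_filter_dvd (fun m => Fintype.card (n - m).Partition) hk]

end Nat.Partition

theorem S_one_eq_sum_count_parts (n k : ℕ) : S 1 n k = ∑ P : n.Partition, P.parts.count k :=
  sum_congr rfl fun P _ => if_pos fun _ hi => P.parts_pos hi

open scoped ArithmeticFunction.Moebius

namespace ArithmeticFunction

theorem sum_divisors_moebius {R : Type*} [Ring R] (m : ℕ) :
    ∑ d ∈ m.divisors, (μ d : R) = if m = 1 then 1 else 0 := by
  have h := congrArg (· m) (coe_zeta_mul_coe_moebius (R := R))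
  simpa only [coe_zeta_mul_apply, intCoe_apply, one_apply] using h

theorem sum_moebius_mul_sum_filter_dvd {R : Type*} [CommRing R] (g : ℕ → R) {N : ℕ}
    (hN : 1 ≤ N) :
    ∑ k ∈ Icc 1 N, (μ k : R) * ∑ m ∈ Icc 1 N with k ∣ m, g m = g 1 := by
  calc _ = ∑ m ∈ Icc 1 N, ∑ k ∈ m.divisors, (μ k : R) * g m := by
        simp_rw [mul_sum]
        refine sum_comm' fun k m => ?_
        simp only [mem_Icc, mem_filter, Nat.mem_divisors]
        constructor
        · rintro ⟨-, ⟨hm1, hmN⟩, hkm⟩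
          exact ⟨⟨hkm, by omega⟩, hm1, hmN⟩
        · rintro ⟨⟨hkm, -⟩, hm1, hmN⟩
          exact ⟨⟨Nat.pos_of_dvd_of_pos hkm hm1, (Nat.le_of_dvd hm1 hkm).trans hmN⟩,
            ⟨hm1, hmN⟩, hkm⟩
    _ = ∑ m ∈ Icc 1 N, if m = 1 then g 1 else 0 := by
        refine sum_congr rfl fun m _ => ?_
        rw [← sum_mul, sum_divisors_moebius]
        split_ifs with hm <;> simp [hm]
    _ = g 1 := by simp [hN]

end ArithmeticFunction

theorem partition_eq_sum_S1_moebius (n : ℕ) :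
    (p n : ℤ) =
      ∑ k ∈ Finset.Icc 1 (n + 1),
        (S 1 (n + 1) k : ℤ) * ArithmeticFunction.moebius k := by
  calc (p n : ℤ)
      = ∑ k ∈ Icc 1 (n + 1), (μ k : ℤ) *
          ∑ m ∈ Icc 1 (n + 1) with k ∣ m, (p (n + 1 - m) : ℤ) := by
        simpa using (ArithmeticFunction.sum_moebius_mul_sum_filter_dvd
          (fun m => (p (n + 1 - m) : ℤ)) n.succ_pos).symm
    _ = _ := by
        refine sum_congr rfl fun k hk => ?_
        rw [S_one_eq_sum_count_parts, Nat.Partition.sum_count_parts_eq_sum_multiples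
          (mem_Icc.mp hk).1, Nat.cast_sum, mul_comm]
        rfl
end

section
/- For every integer n ≥ 0, p(n) = -∑_{k=2}^{n+2} S^{(2)}_{n+2,k} · μ(k), where the sum is over k from 2 to n+2. -/
open Finset

/-!
Write `q r m` for the number of partitions of `m` with all parts at least `r`. Removing `j`
copies of `k ≥ r` shows that the partitions of `N` with parts `≥ r` containing `k` at least `j`
times are counted by `q r (N - jk)`, so `S r N k = ∑_{k ∣ m ≤ N} q r (N - m)`. For `r = 2`,
exchanging the sums and using `∑_{1 < d ∣ m} μ d = -1` for `m ≥ 2` gives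
`∑_k S 2 N k μ k = -∑_{m=2}^N q 2 (N - m) = -∑_{t ≤ N - 2} q 2 t`. Finally, removing a part `1`
gives `p (t + 1) = q 2 (t + 1) + p t`, so that last sum is `p (N - 2)`.
-/

namespace Nat.Partition

lemma count_mul_le {n : ℕ} (P : n.Partition) (k : ℕ) : P.parts.count k * k ≤ n := by
  obtain ⟨rest, hrest⟩ := Multiset.le_iff_exists_add.mp
    (Multiset.le_count_iff_replicate_le.mp (le_refl (P.parts.count k)))
  have := congrArg Multiset.sum hrest
  rw [Multiset.sum_add, Multiset.sum_replicate, smul_eq_mul, P.parts_sum] at this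
  omega

lemma restricted_zero (p : ℕ → Prop) [DecidablePred p] : restricted 0 p = univ :=
  filter_true_of_mem fun P _ ↦ by simp

lemma restricted_one_le (n : ℕ) : restricted n (1 ≤ ·) = univ :=
  filter_true_of_mem fun P _ _ hi ↦ P.parts_pos hi

lemma card_filter_le_count_restricted {r k j N : ℕ} (hk : 0 < k) (hrk : r ≤ k)
    (hjk : j * k ≤ N) :
    #{P ∈ restricted N (r ≤ ·) | j ≤ P.parts.count k} = #(restricted (N - j * k) (r ≤ ·)) := by
  simp only [restricted, filter_filter, Multiset.le_count_iff_replicate_le]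
  refine card_bij' (fun P hP ↦ ⟨P.parts - .replicate j k,
      fun hi ↦ P.parts_pos (Multiset.mem_of_le tsub_le_self hi), ?_⟩)
    (fun Q _ ↦ ⟨Q.parts + .replicate j k, fun hi ↦ ?_, ?_⟩) ?_ ?_ ?_ ?_
  · have := congrArg Multiset.sum (tsub_add_cancel_of_le (mem_filter.mp hP).2.2)
    rw [Multiset.sum_add, Multiset.sum_replicate, smul_eq_mul, P.parts_sum] at this
    omega
  · rcases Multiset.mem_add.mp hi with hi | hi
    · exact Q.parts_pos hi
    · rwa [Multiset.eq_of_mem_replicate hi]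
  · rw [Multiset.sum_add, Multiset.sum_replicate, smul_eq_mul, Q.parts_sum]
    omega
  · intro P hP
    simp only [mem_filter, mem_univ, true_and] at hP ⊢
    exact fun _ hi ↦ hP.1 _ (Multiset.mem_of_le tsub_le_self hi)
  · intro Q hQ
    simp only [mem_filter, mem_univ, true_and] at hQ ⊢
    refine ⟨fun i hi ↦ ?_, Multiset.le_add_left _ _⟩
    rcases Multiset.mem_add.mp hi with hi | hi
    · exact hQ i hi
    · rwa [Multiset.eq_of_mem_replicate hi]
  · exact fun P hP ↦ Nat.Partition.ext (tsub_add_cancel_of_le (mem_filter.mp hP).2.2)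
  · exact fun Q _ ↦ Nat.Partition.ext (add_tsub_cancel_right _ _)

lemma card_restricted_le_eq_add {r N : ℕ} (hr : 0 < r) (hrN : r ≤ N) :
    #(restricted N (r ≤ ·)) = #(restricted N (r + 1 ≤ ·)) + #(restricted (N - r) (r ≤ ·)) := by
  have without_r :
      {P ∈ restricted N (r ≤ ·) | ¬1 ≤ P.parts.count r} = restricted N (r + 1 ≤ ·) := by
    ext P
    simp only [restricted, filter_filter, mem_filter, mem_univ, true_and,
      Multiset.one_le_count_iff_mem]
    exact ⟨fun ⟨h, hr⟩ i hi ↦ lt_of_le_of_ne (h i hi) (by rintro rfl; exact hr hi),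
      fun h ↦ ⟨fun i hi ↦ Nat.le_of_succ_le (h i hi), fun hr ↦ Nat.not_succ_le_self r (h r hr)⟩⟩
  rw [← card_filter_add_card_filter_not (fun P ↦ 1 ≤ P.parts.count r), without_r,
    card_filter_le_count_restricted hr le_rfl (by omega), one_mul, add_comm]

end Nat.Partition

open Nat.Partition

lemma p_succ (n : ℕ) : p (n + 1) = #(restricted (n + 1) (2 ≤ ·)) + p n := by
  simpa [p, restricted_one_le] using card_restricted_le_eq_add one_pos (Nat.le_add_left 1 n)

lemma p_eq_sum_range_card_restricted_two_le (n : ℕ) :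
    p n = ∑ t ∈ range (n + 1), #(restricted t (2 ≤ ·)) := by
  induction n with
  | zero => simp [p, restricted_zero]
  | succ n ih => rw [sum_range_succ, ← ih, p_succ, add_comm]

lemma Finset.sum_eq_sum_Icc_card_filter_le {α : Type*} {s : Finset α} {f : α → ℕ} {B : ℕ}
    (hB : ∀ x ∈ s, f x ≤ B) : ∑ x ∈ s, f x = ∑ j ∈ Icc 1 B, #{x ∈ s | j ≤ f x} := by
  have layers : ∀ x ∈ s, f x = ∑ j ∈ Icc 1 B, if j ≤ f x then 1 else 0 := fun x hx ↦ by
    have : {j ∈ Icc 1 B | j ≤ f x} = Icc 1 (f x) := by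
      ext j; simp only [mem_filter, mem_Icc]; have := hB x hx; omega
    rw [sum_boole, Nat.cast_id, this, Nat.card_Icc, Nat.add_sub_cancel]
  rw [sum_congr rfl layers, sum_comm]
  simp only [card_eq_sum_ones, sum_filter]

lemma Nat.Icc_filter_dvd_eq_map {k : ℕ} (hk : 0 < k) (N : ℕ) :
    {m ∈ Icc 1 N | k ∣ m} = (Icc 1 (N / k)).map ⟨(· * k), mul_left_injective₀ hk.ne'⟩ := by
  ext m
  simp only [mem_map, mem_filter, mem_Icc, Function.Embedding.coeFn_mk, Nat.le_div_iff_mul_le hk]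
  constructor
  · rintro ⟨⟨hm, hmN⟩, j, rfl⟩
    exact ⟨j, ⟨Nat.pos_of_mul_pos_left hm, by rwa [mul_comm]⟩, mul_comm j k⟩
  · rintro ⟨j, ⟨hj, hjN⟩, rfl⟩
    exact ⟨⟨Nat.mul_pos hj hk, hjN⟩, dvd_mul_left k j⟩

lemma S_eq_sum_multiples {r k : ℕ} (hk : 0 < k) (hrk : r ≤ k) (N : ℕ) :
    S r N k = ∑ m ∈ Icc 1 N with k ∣ m, #(restricted (N - m) (r ≤ ·)) := by
  rw [Nat.Icc_filter_dvd_eq_map hk, sum_map]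
  calc S r N k = ∑ P ∈ restricted N (r ≤ ·), P.parts.count k := by rw [S, ← sum_filter]; rfl
  _ = ∑ j ∈ Icc 1 (N / k), #{P ∈ restricted N (r ≤ ·) | j ≤ P.parts.count k} :=
    sum_eq_sum_Icc_card_filter_le fun P _ ↦ (Nat.le_div_iff_mul_le hk).mpr (P.count_mul_le k)
  _ = _ := sum_congr rfl fun j hj ↦ card_filter_le_count_restricted hk hrk
    ((Nat.le_div_iff_mul_le hk).mp (mem_Icc.mp hj).2)

lemma sum_moebius_divisors_erase_one {m : ℕ} (hm : 1 < m) :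
    ∑ d ∈ m.divisors.erase 1, ArithmeticFunction.moebius d = -1 := by
  have h := congrArg (· m) ArithmeticFunction.moebius_mul_coe_zeta
  simp only [ArithmeticFunction.coe_mul_zeta_apply, ArithmeticFunction.one_apply_ne hm.ne'] at h
  rw [sum_erase_eq_sub (Nat.one_mem_divisors.mpr (by omega)), h,
    ArithmeticFunction.moebius_apply_one, zero_sub]

lemma sum_Icc_two_sum_multiples_mul_moebius (N : ℕ) (f : ℕ → ℤ) :
    ∑ k ∈ Icc 2 N, (∑ m ∈ Icc 1 N with k ∣ m, f m) * ArithmeticFunction.moebius k =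
      -∑ m ∈ Icc 2 N, f m := by
  simp_rw [sum_mul]
  rw [sum_comm' (t' := Icc 2 N) (s' := fun m ↦ m.divisors.erase 1)]
  · simp_rw [← mul_sum, ← sum_neg_distrib]
    exact sum_congr rfl fun m hm ↦ by
      rw [sum_moebius_divisors_erase_one (by simp at hm; omega), mul_neg_one]
  · intro k m
    simp only [mem_Icc, mem_filter, mem_erase, Nat.mem_divisors]
    constructor
    · rintro ⟨⟨hk, -⟩, ⟨hm, hmN⟩, hkm⟩
      have := Nat.le_of_dvd hm hkm
      exact ⟨⟨by omega, hkm, by omega⟩, by omega, hmN⟩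
    · rintro ⟨⟨hk, hkm, hm⟩, hm2, hmN⟩
      have := Nat.le_of_dvd (by omega) hkm
      have := Nat.pos_of_dvd_of_pos hkm (by omega)
      exact ⟨⟨by omega, by omega⟩, ⟨by omega, hmN⟩, hkm⟩

theorem partition_eq_neg_sum_S2_moebius (n : ℕ) :
    (p n : ℤ) =
      -∑ k ∈ Finset.Icc 2 (n + 2),
        (S 2 (n + 2) k : ℤ) * ArithmeticFunction.moebius k := by
  have reflect : ∑ m ∈ Icc 2 (n + 2), (#(restricted (n + 2 - m) (2 ≤ ·)) : ℤ) =
      ∑ t ∈ range (n + 1), (#(restricted t (2 ≤ ·)) : ℤ) := by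
    rw [← Ico_add_one_right_eq_Icc,
      sum_Ico_reflect (fun t ↦ (#(restricted t (2 ≤ ·)) : ℤ)) 2 (n := n + 2) le_rfl,
      Nat.sub_self, Nat.Ico_zero_eq_range]
    rfl
  rw [sum_congr rfl fun k hk ↦ by
    rw [S_eq_sum_multiples (by simp at hk; omega) (mem_Icc.mp hk).1]]
  push_cast
  rw [sum_Icc_two_sum_multiples_mul_moebius, reflect, p_eq_sum_range_card_restricted_two_le]
  push_cast
  ring
end

section
/- For all integers n ≥ k > r ≥ 1, S^{(r+1)}_{n+r,k} = S^{(r)}_{n+r,k} - S^{(r)}_{n,k}. -/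
open Finset

/-! A partition with all parts `≥ r` either has all parts `≥ r + 1` or contains the part `r`;
removing one copy of `r` matches the latter with the partitions of `m - r` with all parts `≥ r`,
and it does not change the number of parts equal to `k ≠ r`. -/

theorem Multiset.ite_forall_le_eq_add {M : Type*} [AddCommMonoid M] (s : Multiset ℕ) (r : ℕ)
    (c : M) :
    (if ∀ i ∈ s, r ≤ i then c else 0) =
      (if ∀ i ∈ s, r + 1 ≤ i then c else 0) +
        if r ∈ s then (if ∀ i ∈ s, r ≤ i then c else 0) else 0 := by
  by_cases hr : r ∈ s
  · have hnot : ¬∀ i ∈ s, r + 1 ≤ i := fun h => by have := h r hr; omega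
    rw [if_neg hnot, if_pos hr, zero_add]
  · have hiff : (∀ i ∈ s, r + 1 ≤ i) ↔ ∀ i ∈ s, r ≤ i :=
      forall₂_congr fun i hi =>
        ⟨Nat.le_of_succ_le, fun h => lt_of_le_of_ne h (by rintro rfl; exact hr hi)⟩
    rw [if_neg hr, add_zero]
    exact if_congr hiff.symm rfl rfl

theorem sum_ite_mem_parts_eq_S_sub {r m k : ℕ} (hr : 1 ≤ r) (hrm : r ≤ m) (hk : k ≠ r) :
    (∑ P : m.Partition,
        if r ∈ P.parts then (if ∀ i ∈ P.parts, r ≤ i then P.parts.count k else 0) else 0) =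
      S r (m - r) k := by
  rw [← Finset.sum_filter, Finset.sum_subtype (p := (r ∈ ·.parts)) _ (by simp), S,
    ← (Nat.Partition.partitionWithPartEquiv hr hrm).symm.sum_comp]
  refine Finset.sum_congr rfl fun Q _ => ?_
  simp [Multiset.count_cons_of_ne hk]

theorem S_eq_S_succ_add_S_sub {r m k : ℕ} (hr : 1 ≤ r) (hrm : r ≤ m) (hk : k ≠ r) :
    S r m k = S (r + 1) m k + S r (m - r) k := by
  rw [← sum_ite_mem_parts_eq_S_sub hr hrm hk, S, S, ← Finset.sum_add_distrib]
  exact Finset.sum_congr rfl fun P _ => Multiset.ite_forall_le_eq_add _ _ _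

theorem S_succ_eq_sub_general (n k r : ℕ) (h1 : 1 ≤ r) (h2 : r < k) :
    (S (r + 1) (n + r) k : ℤ) = (S r (n + r) k : ℤ) - (S r n k : ℤ) := by
  have h := S_eq_S_succ_add_S_sub h1 (Nat.le_add_left r n) h2.ne'
  rw [Nat.add_sub_cancel] at h
  omega

theorem S_succ_eq_sub (n k r : ℕ) (h1 : 1 ≤ r) (h2 : r < k) (h3 : k ≤ n) :
    (S (r + 1) (n + r) k : ℤ) = (S r (n + r) k : ℤ) - (S r n k : ℤ) :=
  S_succ_eq_sub_general n k r h1 h2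
end

section
/- Define integer sequences a_{r,j} and b_{r,j} (r ≥ 1, j ≥ 0) by the initial conditions a_{1,0} = b_{1,0} = 1 and a_{1,j} = b_{1,j} = 0 for j > 0, together with the recurrences b_{r+1,j} = b_{r,j} - [j ≥ r]·b_{r,j-r} and a_{r+1,j} = a_{r,j+1} - μ(r)·b_{r,j+1} - [j+1 ≥ r]·a_{r,j+1-r}, where [P] is 1 if P holds and 0 otherwise. Then for all integers n ≥ 0 and r ≥ 1, ∑_{k=r}^{n+r} S^{(r)}_{n+r,k} · μ(k) = ∑_{j ≥ 0} a_{r,j} · p(n-j), where p(m) = 0 for m < 0. -/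
open Finset

/-- The coefficients `b r j`. -/
def b : ℕ → ℕ → ℤ
  | 0, _ => 0
  | 1, j => if j = 0 then 1 else 0
  | r + 1, j => b r j - (if r ≤ j then b r (j - r) else 0)

/-- The coefficients `a r j`. -/
def a : ℕ → ℕ → ℤ
  | 0, _ => 0
  | 1, j => if j = 0 then 1 else 0
  | r + 1, j =>
      a r (j + 1) - ArithmeticFunction.moebius r * b r (j + 1) -
        (if r ≤ j + 1 then a r (j + 1 - r) else 0)

/-!
Let `Φ_r = ∑_N (∑_{λ ⊢ N, parts ≥ r} ∑_{k ∈ λ} μ(k)) X^N` (`moebiusPartsSeries r`),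
`T_r = ∑_N #{λ ⊢ N, parts ≥ r} X^N` (`partsGeSeries r`), `P = ∑ p(n) X^n`, and let `A_r`, `B_r`
be the generating functions of `a r ·`, `b r ·`. The left side of the theorem is the coefficient
of `X^(n+r)` in `Φ_r`, the right side that of `X^n` in `A_r P`. Removing one part `r` from the
partitions that contain one gives `T_{r+1} = (1 - X^r) T_r` and
`Φ_{r+1} = (1 - X^r) Φ_r - μ(r) X^r T_r`, hence `T_r = B_r P`, and the recurrence for `a` is
exactly what propagates `Φ_r = X^r A_r P` from `r` to `r + 1`. The base case `Φ_1 = X P` is the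
Möbius identity `∑_{d ∣ m} μ(d) = [m = 1]`: the parts equal to `k`, counted over all partitions
of `N`, number `∑_{k ∣ m ≤ N} p(N - m)`.
-/

open PowerSeries ArithmeticFunction
open scoped ArithmeticFunction.Moebius

section RestrictedPartitionSum

variable {M : Type*} [AddCommMonoid M]

def restrictedPartitionSum (r n : ℕ) (f : Multiset ℕ → M) : M :=
  ∑ P : n.Partition, if ∀ i ∈ P.parts, r ≤ i then f P.parts else 0

lemma S_eq_restrictedPartitionSum (r n k : ℕ) :
    S r n k = restrictedPartitionSum r n (Multiset.count k) := rfl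

lemma restrictedPartitionSum_one (n : ℕ) (f : Multiset ℕ → M) :
    restrictedPartitionSum 1 n f = ∑ P : n.Partition, f P.parts :=
  sum_congr rfl fun P _ => if_pos fun _ hi => P.parts_pos hi

lemma sum_partition_filter_mem_parts {n k : ℕ} (hk : 1 ≤ k) (hkn : k ≤ n)
    (f : Multiset ℕ → M) :
    ∑ P : n.Partition with k ∈ P.parts, f P.parts =
      ∑ Q : (n - k).Partition, f (k ::ₘ Q.parts) := by
  rw [Finset.sum_subtype (p := fun P : n.Partition => k ∈ P.parts) _ (by simp),
    ← (Nat.Partition.partitionWithPartEquiv hk hkn).symm.sum_comp]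
  simp

lemma restrictedPartitionSum_eq_add {r : ℕ} (hr : 1 ≤ r) (n : ℕ) (f : Multiset ℕ → M) :
    restrictedPartitionSum r n f = restrictedPartitionSum (r + 1) n f +
      if r ≤ n then restrictedPartitionSum r (n - r) (fun s => f (r ::ₘ s)) else 0 := by
  set g : Multiset ℕ → M := fun s => if ∀ i ∈ s, r ≤ i then f s else 0
  have hsplit : restrictedPartitionSum r n f = restrictedPartitionSum (r + 1) n f +
      ∑ P : n.Partition with r ∈ P.parts, g P.parts := by
    rw [sum_filter, restrictedPartitionSum, restrictedPartitionSum, ← sum_add_distrib]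
    exact sum_congr rfl fun P _ => by grind
  rw [hsplit]
  split_ifs with hrn
  · rw [sum_partition_filter_mem_parts hr hrn]
    simp [g, restrictedPartitionSum]
  · rw [sum_eq_zero fun P hP => absurd (Nat.Partition.le_of_mem_parts (mem_filter.1 hP).2) hrn]

lemma restrictedPartitionSum_self {r : ℕ} (hr : 1 ≤ r) (f : Multiset ℕ → M) :
    restrictedPartitionSum r r f = f {r} := by
  rw [restrictedPartitionSum, sum_eq_single (Nat.Partition.indiscrete r)]
  · simp [Nat.Partition.indiscrete_parts (by omega : r ≠ 0)]
  · intro P _ hP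
    refine if_neg fun hge => hP (Nat.Partition.ext ?_)
    obtain ⟨i, hi⟩ := Multiset.exists_mem_of_ne_zero (s := P.parts) fun h0 => by
      have := P.parts_sum
      rw [h0, Multiset.sum_zero] at this
      omega
    obtain rfl : i = r := le_antisymm (Nat.Partition.le_of_mem_parts hi) (hge i hi)
    have hrest : (P.parts.erase i).sum = 0 := by
      have := congrArg Multiset.sum (Multiset.cons_erase hi)
      rw [Multiset.sum_cons, P.parts_sum] at this
      omega
    have herase : P.parts.erase i = 0 := Multiset.eq_zero_of_forall_notMem fun x hx =>
      (P.parts_pos (Multiset.mem_of_mem_erase hx)).ne' (Multiset.sum_eq_zero_iff.1 hrest x hx)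
    rw [Nat.Partition.indiscrete_parts (by omega), ← Multiset.cons_erase hi, herase]
    rfl
  · simp

lemma sum_Icc_S_smul (r n : ℕ) (f : ℕ → M) :
    ∑ k ∈ Icc r n, S r n k • f k = restrictedPartitionSum r n fun s => (s.map f).sum := by
  simp only [S, restrictedPartitionSum, sum_smul, ite_smul, zero_smul]
  rw [sum_comm]
  refine sum_congr rfl fun P _ => ?_
  rw [sum_ite_irrel, sum_const_zero]
  split_ifs with hP
  · rw [sum_multiset_map_count]
    refine (sum_subset (fun i hi => ?_) fun i _ hi => ?_).symm
    · rw [Multiset.mem_toFinset] at hi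
      exact mem_Icc.2 ⟨hP i hi, Nat.Partition.le_of_mem_parts hi⟩
    · rw [Multiset.count_eq_zero_of_notMem (by simpa using hi), zero_smul]
  · rfl

end RestrictedPartitionSum

lemma S_eq_zero_of_lt {r n k : ℕ} (h : n < k) : S r n k = 0 :=
  sum_eq_zero fun P _ => by
    simp [Multiset.count_eq_zero_of_notMem fun hk => (Nat.Partition.le_of_mem_parts hk).not_gt h]

lemma S_one_eq_add {n k : ℕ} (hk : 1 ≤ k) (hkn : k ≤ n) :
    S 1 n k = S 1 (n - k) k + p (n - k) := by
  have h := sum_partition_filter_mem_parts hk hkn (Multiset.count k)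
  rw [sum_filter_of_ne fun P _ h => Multiset.count_ne_zero.1 h] at h
  simp [S_eq_restrictedPartitionSum, restrictedPartitionSum_one, h, sum_add_distrib, p]

lemma filter_dvd_Ioc_eq_insert {k n : ℕ} (hk : 1 ≤ k) (hkn : k ≤ n) :
    {m ∈ Ioc 0 n | k ∣ m} = insert k ({m ∈ Ioc 0 (n - k) | k ∣ m}.map (addLeftEmbedding k)) := by
  ext m
  simp only [mem_insert, mem_map, mem_filter, mem_Ioc, addLeftEmbedding_apply]
  constructor
  · rintro ⟨⟨hm0, hmn⟩, hkm⟩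
    rcases (Nat.le_of_dvd hm0 hkm).eq_or_lt with rfl | hlt
    · exact Or.inl rfl
    · exact Or.inr ⟨m - k, ⟨⟨by omega, by omega⟩, Nat.dvd_sub hkm dvd_rfl⟩, by omega⟩
  · rintro (rfl | ⟨m, ⟨⟨_, _⟩, hkm⟩, rfl⟩)
    · exact ⟨⟨hk, hkn⟩, dvd_rfl⟩
    · exact ⟨⟨by omega, by omega⟩, dvd_add dvd_rfl hkm⟩

lemma S_one_eq_sum_dvd {k : ℕ} (hk : 1 ≤ k) (n : ℕ) :
    S 1 n k = ∑ m ∈ Ioc 0 n with k ∣ m, p (n - m) := by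
  induction n using Nat.strong_induction_on with
  | _ n ih =>
  rcases lt_or_ge n k with hnk | hkn
  · rw [S_eq_zero_of_lt hnk, sum_eq_zero]
    intro m hm
    simp only [mem_filter, mem_Ioc] at hm
    exact absurd (Nat.le_of_dvd hm.1.1 hm.2) (by omega)
  · rw [S_one_eq_add hk hkn, ih (n - k) (by omega), filter_dvd_Ioc_eq_insert hk hkn,
      sum_insert (by simp), sum_map]
    simp [Nat.sub_sub, add_comm]

lemma sum_divisors_moebius (m : ℕ) : ∑ d ∈ m.divisors, μ d = if m = 1 then 1 else 0 := by
  rw [← coe_mul_zeta_apply, moebius_mul_coe_zeta, one_apply]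

lemma sum_S_one_mul_moebius (n : ℕ) :
    ∑ k ∈ Icc 1 (n + 1), (S 1 (n + 1) k : ℤ) * μ k = p n := by
  calc ∑ k ∈ Icc 1 (n + 1), (S 1 (n + 1) k : ℤ) * μ k
      = ∑ k ∈ Icc 1 (n + 1), ∑ m ∈ Ioc 0 (n + 1) with k ∣ m, (p (n + 1 - m) : ℤ) * μ k := by
        refine sum_congr rfl fun k hk => ?_
        rw [S_one_eq_sum_dvd (mem_Icc.1 hk).1, Nat.cast_sum, sum_mul]
    _ = ∑ m ∈ Ioc 0 (n + 1), ∑ d ∈ m.divisors, (p (n + 1 - m) : ℤ) * μ d := by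
        refine sum_comm' fun k m => ?_
        simp only [mem_Icc, mem_filter, mem_Ioc, Nat.mem_divisors]
        constructor
        · rintro ⟨⟨hk, -⟩, ⟨hm, hmn⟩, hkm⟩
          exact ⟨⟨hkm, by omega⟩, hm, hmn⟩
        · rintro ⟨⟨hkm, hm⟩, hm0, hmn⟩
          have := Nat.le_of_dvd hm0 hkm
          have := Nat.pos_of_dvd_of_pos hkm hm0
          exact ⟨⟨by omega, by omega⟩, ⟨hm0, hmn⟩, hkm⟩
    _ = p n := by
        simp [← mul_sum, sum_divisors_moebius]

lemma b_succ {r : ℕ} (hr : 1 ≤ r) (j : ℕ) :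
    b (r + 1) j = b r j - if r ≤ j then b r (j - r) else 0 := by
  obtain ⟨r, rfl⟩ := Nat.exists_eq_add_of_le' hr
  rfl

lemma a_succ {r : ℕ} (hr : 1 ≤ r) (j : ℕ) :
    a (r + 1) j = a r (j + 1) - μ r * b r (j + 1) - if r ≤ j + 1 then a r (j + 1 - r) else 0 := by
  obtain ⟨r, rfl⟩ := Nat.exists_eq_add_of_le' hr
  rfl

lemma b_zero {r : ℕ} (hr : 1 ≤ r) : b r 0 = 1 := by
  induction r, hr using Nat.le_induction with
  | base => rfl
  | succ r hr ih => rw [b_succ hr, if_neg (by omega), ih, sub_zero]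

def restrictedPartitionSeries {R : Type*} [Semiring R] (r : ℕ) (f : Multiset ℕ → R) : R⟦X⟧ :=
  PowerSeries.mk fun n => restrictedPartitionSum r n f

lemma restrictedPartitionSeries_eq_add {R : Type*} [Semiring R] {r : ℕ} (hr : 1 ≤ r)
    (f : Multiset ℕ → R) :
    restrictedPartitionSeries r f = restrictedPartitionSeries (r + 1) f +
      X ^ r * restrictedPartitionSeries r fun s => f (r ::ₘ s) := by
  ext n
  rw [map_add, coeff_X_pow_mul']
  simp only [restrictedPartitionSeries, coeff_mk]
  exact restrictedPartitionSum_eq_add hr n f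

def partitionSeries : ℤ⟦X⟧ := PowerSeries.mk fun n => (p n : ℤ)

def partsGeSeries (r : ℕ) : ℤ⟦X⟧ := restrictedPartitionSeries r 1

def moebiusPartsSeries (r : ℕ) : ℤ⟦X⟧ := restrictedPartitionSeries r fun s => (s.map μ).sum

lemma partsGeSeries_one : partsGeSeries 1 = partitionSeries := by
  ext n
  simp [partsGeSeries, partitionSeries, restrictedPartitionSeries, restrictedPartitionSum_one, p]

lemma partsGeSeries_succ {r : ℕ} (hr : 1 ≤ r) :
    partsGeSeries (r + 1) = (1 - X ^ r) * partsGeSeries r := by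
  have h := restrictedPartitionSeries_eq_add hr (1 : Multiset ℕ → ℤ)
  rw [partsGeSeries, partsGeSeries]
  linear_combination -h

lemma mk_b_succ {r : ℕ} (hr : 1 ≤ r) :
    PowerSeries.mk (b (r + 1)) = (1 - X ^ r) * PowerSeries.mk (b r) := by
  ext j
  simp [sub_mul, coeff_X_pow_mul', b_succ hr]

lemma partsGeSeries_eq {r : ℕ} (hr : 1 ≤ r) :
    partsGeSeries r = PowerSeries.mk (b r) * partitionSeries := by
  induction r, hr using Nat.le_induction with
  | base =>
    rw [partsGeSeries_one, show PowerSeries.mk (b 1) = 1 by ext j; simp [b, coeff_one]]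
    ring
  | succ r hr ih => rw [partsGeSeries_succ hr, ih, mk_b_succ hr]; ring

lemma moebiusPartsSeries_succ {r : ℕ} (hr : 1 ≤ r) :
    moebiusPartsSeries (r + 1) =
      (1 - X ^ r) * moebiusPartsSeries r - C (μ r) * X ^ r * partsGeSeries r := by
  have hcons : (restrictedPartitionSeries r fun s => ((r ::ₘ s).map μ).sum) =
      C (μ r) * partsGeSeries r + moebiusPartsSeries r := by
    ext n
    simp only [restrictedPartitionSeries, partsGeSeries, moebiusPartsSeries, coeff_mk, map_add,
      coeff_C_mul, restrictedPartitionSum, Multiset.map_cons, Multiset.sum_cons, mul_sum,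
      ← sum_add_distrib]
    refine sum_congr rfl fun P _ => ?_
    split_ifs <;> simp
  have h : moebiusPartsSeries r = moebiusPartsSeries (r + 1) +
      X ^ r * (C (μ r) * partsGeSeries r + moebiusPartsSeries r) := by
    rw [← hcons]
    exact restrictedPartitionSeries_eq_add hr _
  linear_combination -h

lemma moebiusPartsSeries_one : moebiusPartsSeries 1 = X * partitionSeries := by
  ext (_ | n)
  · simp [moebiusPartsSeries, restrictedPartitionSeries, restrictedPartitionSum]
  · rw [coeff_succ_X_mul, moebiusPartsSeries, restrictedPartitionSeries, coeff_mk,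
      partitionSeries, coeff_mk, ← sum_S_one_mul_moebius n]
    simp [← sum_Icc_S_smul]

lemma mk_a_succ {r : ℕ} (hr : 1 ≤ r) (h0 : a r 0 = μ r) :
    X * PowerSeries.mk (a (r + 1)) =
      (1 - X ^ r) * PowerSeries.mk (a r) - C (μ r) * PowerSeries.mk (b r) := by
  ext (_ | j)
  · simp [sub_mul, h0, b_zero hr, Nat.one_le_iff_ne_zero.1 hr]
  · simp only [coeff_succ_X_mul, coeff_mk, map_sub, sub_mul, one_mul, coeff_X_pow_mul',
      coeff_C_mul, a_succ hr]
    ring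

theorem moebiusPartsSeries_eq {r : ℕ} (hr : 1 ≤ r) :
    moebiusPartsSeries r = X ^ r * (PowerSeries.mk (a r) * partitionSeries) := by
  induction r, hr using Nat.le_induction with
  | base =>
    rw [moebiusPartsSeries_one, show PowerSeries.mk (a 1) = 1 by ext j; simp [a, coeff_one]]
    ring
  | succ r hr ih =>
    -- compare coefficients of `X ^ r`: only the partition `{r}` contributes on the left
    have h0 : a r 0 = μ r := by
      have h := congrArg (coeff r) ih
      simpa [moebiusPartsSeries, restrictedPartitionSeries, restrictedPartitionSum_self hr,
        coeff_X_pow_mul', partitionSeries, p] using h.symm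
    rw [moebiusPartsSeries_succ hr, ih, partsGeSeries_eq hr]
    linear_combination -(X ^ r * partitionSeries) * mk_a_succ hr h0

lemma coeff_mk_mul_partitionSeries (c : ℕ → ℤ) (n : ℕ) :
    coeff n (PowerSeries.mk c * partitionSeries) =
      ∑ j ∈ range (n + 1), c j * pz ((n : ℤ) - (j : ℤ)) := by
  rw [coeff_mul, Nat.sum_antidiagonal_eq_sum_range_succ_mk]
  refine sum_congr rfl fun j hj => ?_
  have hjn : (n : ℤ) - j = (n - j : ℕ) := by
    rw [Nat.cast_sub (Nat.lt_succ_iff.1 (mem_range.1 hj))]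
  simp [partitionSeries, pz, hjn]

theorem sum_S_moebius_eq_sum_a_mul_p (n r : ℕ) (hr : 1 ≤ r) :
    ∑ k ∈ Finset.Icc r (n + r),
        (S r (n + r) k : ℤ) * ArithmeticFunction.moebius k =
      ∑ j ∈ Finset.range (n + 1), a r j * pz ((n : ℤ) - (j : ℤ)) := by
  calc ∑ k ∈ Icc r (n + r), (S r (n + r) k : ℤ) * μ k
      = coeff (n + r) (moebiusPartsSeries r) := by
        simp [moebiusPartsSeries, restrictedPartitionSeries, ← sum_Icc_S_smul]
    _ = coeff n (PowerSeries.mk (a r) * partitionSeries) := by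
        rw [moebiusPartsSeries_eq hr, coeff_X_pow_mul', if_pos (by omega), Nat.add_sub_cancel]
    _ = _ := coeff_mk_mul_partitionSeries (a r) n
end

section
/- For every integer n ≥ 3, the number of partitions of n with no parts equal to 1 and whose largest part occurs more than once equals p(n) - 2p(n-1) + p(n-2) (the second backward difference ∇²[p](n)). -/
/-!
Write `q n` for the number of partitions of `n` without a part `1`. Removing one part `1` shows
`q (n + 1) = p (n + 1) - p n`. Among the `1`-free partitions of `n + 3`, those whose largest part
occurs only once correspond to the `1`-free partitions of `n + 2`: lower that largest part by one,
and conversely raise one copy of the largest part by one. Hence the count in question is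
`q (n + 3) - q (n + 2)`, the second backward difference of `p`.
-/

open Finset

namespace Multiset

section LinearOrder

variable {α : Type*} [LinearOrder α] [OrderBot α] {s : Multiset α}

theorem sup_mem_of_ne_zero (hs : s ≠ 0) : s.sup ∈ s := by
  induction s using Multiset.induction with
  | empty => exact absurd rfl hs
  | cons a t ih =>
    rw [sup_cons]
    rcases eq_or_ne t 0 with rfl | ht
    · simp
    rcases le_total a t.sup with h | h
    · rw [sup_eq_right.mpr h]
      exact mem_cons_of_mem (ih ht)
    · rw [sup_eq_left.mpr h]
      exact mem_cons_self a t

theorem exists_greatest_and_iff (P : α → Prop) :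
    (∃ m ∈ s, (∀ i ∈ s, i ≤ m) ∧ P m) ↔ s ≠ 0 ∧ P s.sup := by
  constructor
  · rintro ⟨m, hm, hmax, hP⟩
    have : s.sup = m := le_antisymm (sup_le.mpr hmax) (le_sup hm)
    exact ⟨fun h => by simp [h] at hm, this ▸ hP⟩
  · rintro ⟨hs, hP⟩
    exact ⟨s.sup, sup_mem_of_ne_zero hs, fun i hi => le_sup hi, hP⟩

theorem lt_sup_of_mem_erase_sup (h : s.count s.sup = 1) {i : α} (hi : i ∈ s.erase s.sup) :
    i < s.sup := by
  refine lt_of_le_of_ne (le_sup (mem_of_mem_erase hi)) ?_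
  rintro rfl
  rw [← count_pos, count_erase_self, h] at hi
  exact lt_irrefl 0 hi

end LinearOrder

def raiseMax (s : Multiset ℕ) : Multiset ℕ := (s.sup + 1) ::ₘ s.erase s.sup

def lowerMax (s : Multiset ℕ) : Multiset ℕ := (s.sup - 1) ::ₘ s.erase s.sup

variable {s : Multiset ℕ}

theorem sup_raiseMax (s : Multiset ℕ) : s.raiseMax.sup = s.sup + 1 := by
  refine (sup_cons ..).trans (sup_eq_left.mpr (sup_le.mpr fun i hi => ?_))
  exact Nat.le_succ_of_le (le_sup (mem_of_mem_erase hi))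

theorem count_sup_raiseMax (s : Multiset ℕ) : s.raiseMax.count s.raiseMax.sup = 1 := by
  rw [sup_raiseMax, raiseMax, count_cons_self, count_eq_zero.mpr]
  intro h
  exact Nat.not_succ_le_self _ (le_sup (mem_of_mem_erase h))

theorem sum_raiseMax (s : Multiset ℕ) : s.raiseMax.sum = s.sum + 1 := by
  rcases eq_or_ne s 0 with rfl | hs
  · rfl
  rw [raiseMax, sum_cons, ← sum_erase (sup_mem_of_ne_zero hs)]
  omega

theorem sum_lowerMax (h : 0 < s.sup) : s.lowerMax.sum + 1 = s.sum := by
  have hs : s ≠ 0 := by rintro rfl; exact lt_irrefl 0 h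
  rw [lowerMax, sum_cons, ← sum_erase (sup_mem_of_ne_zero hs)]
  omega

theorem sup_lowerMax (h : s.count s.sup = 1) : s.lowerMax.sup = s.sup - 1 :=
  (sup_cons ..).trans <| sup_eq_left.mpr <| sup_le.mpr fun _ hi =>
    Nat.le_sub_one_of_lt (lt_sup_of_mem_erase_sup h hi)

theorem lowerMax_raiseMax (hs : s ≠ 0) : s.raiseMax.lowerMax = s := by
  rw [lowerMax, sup_raiseMax, Nat.add_sub_cancel, raiseMax, erase_cons_head,
    cons_erase (sup_mem_of_ne_zero hs)]

theorem raiseMax_lowerMax (h : s.count s.sup = 1) (hpos : 0 < s.sup) :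
    s.lowerMax.raiseMax = s := by
  rw [raiseMax, sup_lowerMax h, Nat.sub_add_cancel hpos, lowerMax, erase_cons_head,
    cons_erase (count_pos.mp (h ▸ one_pos))]

end Multiset

theorem Nat.card_subtype_and_add_card_subtype_and_not {α : Type*} [Fintype α] (P Q : α → Prop) :
    Nat.card {x // P x ∧ Q x} + Nat.card {x // P x ∧ ¬Q x} = Nat.card {x // P x} := by
  classical
  simp only [Nat.card_eq_fintype_card, Fintype.card_subtype, ← filter_filter]
  exact card_filter_add_card_filter_not _

namespace Nat.Partition

open Multiset

variable {n : ℕ}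

theorem parts_ne_zero (P : (n + 1).Partition) : P.parts ≠ 0 := by
  intro h
  have := P.parts_sum
  rw [h, Multiset.sum_zero] at this
  exact Nat.succ_ne_zero n this.symm

def raiseLargestPart (P : n.Partition) : (n + 1).Partition where
  parts := P.parts.raiseMax
  parts_pos hi := by
    rcases mem_cons.mp hi with rfl | hi
    · exact Nat.succ_pos _
    · exact P.parts_pos (mem_of_mem_erase hi)
  parts_sum := by rw [sum_raiseMax, P.parts_sum]

theorem two_le_sup_of_count_sup_eq_one (P : (n + 2).Partition)
    (h : P.parts.count P.parts.sup = 1) : 2 ≤ P.parts.sup := by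
  have hsum := sum_erase (count_pos.mp (h ▸ one_pos))
  rw [P.parts_sum] at hsum
  rcases eq_or_ne (P.parts.erase P.parts.sup) 0 with he | he
  · rw [he, Multiset.sum_zero] at hsum
    omega
  · obtain ⟨i, hi⟩ := exists_mem_of_ne_zero he
    have := P.parts_pos (mem_of_mem_erase hi)
    have := lt_sup_of_mem_erase_sup h hi
    omega

def lowerLargestPart (P : {P : (n + 2).Partition // P.parts.count P.parts.sup = 1}) :
    (n + 1).Partition where
  parts := P.1.parts.lowerMax
  parts_pos hi := by
    have := two_le_sup_of_count_sup_eq_one P.1 P.2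
    rcases mem_cons.mp hi with rfl | hi
    · omega
    · exact P.1.parts_pos (mem_of_mem_erase hi)
  parts_sum := by
    have := sum_lowerMax (zero_lt_two.trans_le (two_le_sup_of_count_sup_eq_one P.1 P.2))
    rw [P.1.parts_sum] at this
    omega

def uniqueLargestPartEquiv (n : ℕ) :
    {P : (n + 2).Partition // P.parts.count P.parts.sup = 1} ≃ (n + 1).Partition where
  toFun := lowerLargestPart
  invFun Q := ⟨Q.raiseLargestPart, count_sup_raiseMax _⟩
  left_inv P := Subtype.ext <| Nat.Partition.ext <|
    raiseMax_lowerMax P.2 (zero_lt_two.trans_le (two_le_sup_of_count_sup_eq_one P.1 P.2))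
  right_inv Q := Nat.Partition.ext <| lowerMax_raiseMax Q.parts_ne_zero

theorem one_mem_raiseLargestPart_iff (Q : (n + 2).Partition) :
    1 ∈ Q.raiseLargestPart.parts ↔ 1 ∈ Q.parts := by
  have hsup := sup_mem_of_ne_zero Q.parts_ne_zero
  have hpos := Q.parts_pos hsup
  simp only [raiseLargestPart, raiseMax, Multiset.mem_cons]
  rcases eq_or_ne 1 Q.parts.sup with h1 | h1
  -- all parts are then `1`, and there are at least two of them
  · have hsum := sum_erase hsup
    rw [Q.parts_sum, ← h1] at hsum
    obtain ⟨i, hi⟩ := exists_mem_of_ne_zero fun he : Q.parts.erase 1 = 0 => by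
      rw [he, Multiset.sum_zero] at hsum
      omega
    have hi1 : i = 1 := le_antisymm (h1 ▸ le_sup (mem_of_mem_erase hi))
      (Q.parts_pos (mem_of_mem_erase hi))
    rw [← h1]
    exact iff_of_true (Or.inr (hi1 ▸ hi)) (h1 ▸ hsup)
  · rw [mem_erase_of_ne h1]
    exact or_iff_right (by omega)

theorem card_count_sup_eq_one_and_one_not_mem (n : ℕ) :
    Nat.card {P : (n + 3).Partition // P.parts.count P.parts.sup = 1 ∧ 1 ∉ P.parts} =
      Nat.card {Q : (n + 2).Partition // 1 ∉ Q.parts} :=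
  Nat.card_congr <| (Equiv.subtypeSubtypeEquivSubtypeInter _ _).symm.trans <|
    ((uniqueLargestPartEquiv (n + 1)).symm.subtypeEquiv
      fun Q => (one_mem_raiseLargestPart_iff Q).symm.not).symm

end Nat.Partition

theorem card_one_not_mem_add_p (n : ℕ) :
    Nat.card {P : (n + 1).Partition // 1 ∉ P.parts} + p n = p (n + 1) := by
  have hmem : Fintype.card {P : (n + 1).Partition // 1 ∈ P.parts} = p n :=
    Fintype.card_congr (Nat.Partition.partitionWithPartEquiv le_rfl (by omega))
  rw [Nat.card_eq_fintype_card, Fintype.card_subtype_compl, hmem]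
  exact Nat.sub_add_cancel (hmem ▸ Fintype.card_subtype_le _)

theorem card_no_ones_max_repeated_eq_nabla_sq (n : ℕ) (hn : 3 ≤ n) :
    (Nat.card {P : Nat.Partition n //
        1 ∉ P.parts ∧
        ∃ m ∈ P.parts, (∀ i ∈ P.parts, i ≤ m) ∧ 2 ≤ P.parts.count m} : ℤ) =
      (p n : ℤ) - 2 * (p (n - 1) : ℤ) + (p (n - 2) : ℤ) := by
  obtain ⟨n, rfl⟩ := Nat.exists_eq_add_of_le' hn
  have hrepeated : Nat.card {P : (n + 3).Partition // 1 ∉ P.parts ∧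
      ∃ m ∈ P.parts, (∀ i ∈ P.parts, i ≤ m) ∧ 2 ≤ P.parts.count m} =
      Nat.card {P : (n + 3).Partition // 1 ∉ P.parts ∧ 2 ≤ P.parts.count P.parts.sup} :=
    Nat.card_congr <| Equiv.subtypeEquivRight fun P => and_congr_right' <|
      (Multiset.exists_greatest_and_iff _).trans (and_iff_right P.parts_ne_zero)
  have hunique : Nat.card {P : (n + 3).Partition // 1 ∉ P.parts ∧
      ¬2 ≤ P.parts.count P.parts.sup} = Nat.card {Q : (n + 2).Partition // 1 ∉ Q.parts} := by
    refine (Nat.card_congr <| Equiv.subtypeEquivRight fun P => ?_).trans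
      (Nat.Partition.card_count_sup_eq_one_and_one_not_mem n)
    have := Multiset.count_pos.mpr (Multiset.sup_mem_of_ne_zero P.parts_ne_zero)
    exact and_comm.trans (and_congr_left' (by omega))
  have hsplit := Nat.card_subtype_and_add_card_subtype_and_not
    (fun P : (n + 3).Partition => 1 ∉ P.parts) fun P => 2 ≤ P.parts.count P.parts.sup
  have h3 : Nat.card {P : (n + 3).Partition // 1 ∉ P.parts} + p (n + 2) = p (n + 3) :=
    card_one_not_mem_add_p (n + 2)
  have h2 : Nat.card {P : (n + 2).Partition // 1 ∉ P.parts} + p (n + 1) = p (n + 2) :=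
    card_one_not_mem_add_p (n + 1)
  rw [hrepeated, show n + 3 - 1 = n + 2 by omega, show n + 3 - 2 = n + 1 by omega]
  omega
end
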